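/- arXiv:2101.06260 — 2 statements merged into one kernel-verified Lean document; each statement's English description precedes it below -/
import Mathlib

section
/- For all non-negative integers n, j and all integers r ≥ 2, b_{j,r}(n) = (r−1)·((j+1)·|D_{j+1,r}(n)| − j·|D_{j,r}(n)|), where the equality holds in the integers. -/
open Finset

/-- The number of parts of a partition. -/
def numParts {n : ℕ} (p : Nat.Partition n) : ℕ := Multiset.card p.parts

/-- The number of different parts of a partition. -/
def numDistinctParts {n : ℕ} (p : Nat.Partition n) : ℕ := p.parts.toFinset.card

/-- `O_{j,r}(n)`: partitions of `n` with exactly `j` different parts divisible by `r`. -/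
def setO (j r n : ℕ) : Finset (Nat.Partition n) :=
  Finset.univ.filter fun p => (p.parts.toFinset.filter fun i => r ∣ i).card = j

/-- `D_{j,r}(n)`: partitions of `n` with exactly `j` different parts repeated at least `r`
times (all other parts appearing at most `r - 1` times). -/
def setD (j r n : ℕ) : Finset (Nat.Partition n) :=
  Finset.univ.filter fun p => (p.parts.toFinset.filter fun i => r ≤ p.parts.count i).card = j

/-- `O_{≤j,r}(n)`: partitions of `n` with at most `j` different parts divisible by `r`. -/
def setOle (j r n : ℕ) : Finset (Nat.Partition n) :=
  Finset.univ.filter fun p => (p.parts.toFinset.filter fun i => r ∣ i).card ≤ j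

/-- `D_{≤j,r}(n)`: partitions of `n` with at most `j` different parts repeated at least `r`
times (all other parts appearing at most `r - 1` times). -/
def setDle (j r n : ℕ) : Finset (Nat.Partition n) :=
  Finset.univ.filter fun p => (p.parts.toFinset.filter fun i => r ≤ p.parts.count i).card ≤ j

/-- `ℓ_t(λ)`: the number of parts of `λ` congruent to `t` modulo `r`, counted with
multiplicity. -/
def ellMod {n : ℕ} (r t : ℕ) (p : Nat.Partition n) : ℕ :=
  Multiset.card (p.parts.filter fun i => i % r = t)

/-- `ℓ̄_t(λ)`: the number of different parts of `λ` whose residual multiplicity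
(multiplicity mod `r`) is at least `t`. -/
def ellBarMod {n : ℕ} (r t : ℕ) (p : Nat.Partition n) : ℕ :=
  (p.parts.toFinset.filter fun i => t ≤ p.parts.count i % r).card

/-- `b_{j,r}(n)`: the difference between the number of parts in all partitions in
`O_{j,r}(n)` and the number of parts in all partitions in `D_{j,r}(n)`. -/
def bDiff (j r n : ℕ) : ℤ :=
  (∑ p ∈ setO j r n, (numParts p : ℤ)) - ∑ p ∈ setD j r n, (numParts p : ℤ)

/-- `b_{≤j,r}(n)`. -/
def bDiffLe (j r n : ℕ) : ℤ :=
  (∑ p ∈ setOle j r n, (numParts p : ℤ)) - ∑ p ∈ setDle j r n, (numParts p : ℤ)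

/-- `E_{j,r,t}(n)`. -/
def EDiff (j r t n : ℕ) : ℤ :=
  (∑ p ∈ setO j r n, ((ellMod r t p : ℤ) - (ellMod r 0 p : ℤ))) -
    ∑ p ∈ setD j r n, (ellBarMod r t p : ℤ)

/-- `b'_{j,r}(n)`: the difference between the number of different parts in all partitions in
`D_{j,r}(n)` and the number of different parts in all partitions in `O_{j,r}(n)`. -/
def bDiff' (j r n : ℕ) : ℤ :=
  (∑ p ∈ setD j r n, (numDistinctParts p : ℤ)) - ∑ p ∈ setO j r n, (numDistinctParts p : ℤ)

/-- `b'_{≤j,r}(n)`. -/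
def bDiffLe' (j r n : ℕ) : ℤ :=
  (∑ p ∈ setDle j r n, (numDistinctParts p : ℤ)) - ∑ p ∈ setOle j r n, (numDistinctParts p : ℤ)

/-- `T_{j,r}(n)`: the number of different parts with multiplicity between `r + 1` and
`2r - 1` in all partitions in `D_{j,r}(n)`. -/
def Tcount (j r n : ℕ) : ℕ :=
  ∑ p ∈ setD j r n,
    (p.parts.toFinset.filter fun i =>
      r + 1 ≤ p.parts.count i ∧ p.parts.count i ≤ 2 * r - 1).card

/-!
Write `A(λ)` for the set of distinct parts of `λ` divisible by `r` and `D(μ)` for the set of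
distinct parts of `μ` repeated at least `r` times. Splitting one copy of each part `s` of a marked
set `S ⊆ A(λ)` into `r` copies of `s / r` is a bijection onto the pairs `(μ, T)` with `T ⊆ D(μ)`
(the inverse merges `r` copies of each `t ∈ T`); it keeps the number of marks and adds `r - 1`
parts per mark. Since `∑_{S ⊆ F} (x - 1)^{|S|} = x^{|F|}`, summing `ℓ(λ) (x - 1)^{|S|}` over the
marked pairs gives `∑_λ ℓ(λ) x^{|A(λ)|}`, while summing `(ℓ(μ) - (r - 1)|T|) (x - 1)^{|T|}` gives
`∑_μ ℓ(μ) x^{|D(μ)|} - (r - 1)(x - 1) G'(x)` with `G(x) = ∑_μ x^{|D(μ)|}`, because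
`∑_{T ⊆ F} |T| (x - 1)^{|T|} = (x - 1) (x^{|F|})'`. Comparing coefficients of `x^j` gives the
theorem.
-/

open Polynomial

namespace Finset

variable {r : ℕ}

theorem image_mul_image_div {S : Finset ℕ} (h : ∀ s ∈ S, r ∣ s) :
    (S.image (· / r)).image (r * ·) = S := by
  rw [image_image]
  exact (image_congr fun s hs => Nat.mul_div_cancel' (h s hs)).trans image_id

theorem image_div_image_mul (hr : 0 < r) (T : Finset ℕ) :
    (T.image (r * ·)).image (· / r) = T := by
  rw [image_image]
  exact (image_congr fun t _ => Nat.mul_div_cancel_left t hr).trans image_id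

theorem card_image_mul (hr : 0 < r) (T : Finset ℕ) : (T.image (r * ·)).card = T.card :=
  card_image_of_injective _ (mul_right_injective₀ hr.ne')

theorem sum_val_image_mul (hr : 0 < r) (T : Finset ℕ) :
    (T.image (r * ·)).val.sum = (r • T.val).sum := by
  rw [Multiset.sum_nsmul, sum_val, sum_val, sum_image fun x _ y _ h =>
    mul_right_injective₀ hr.ne' h, smul_eq_mul, mul_sum]
  rfl

theorem sum_val_eq_sum_nsmul_image_div (hr : 0 < r) {S : Finset ℕ} (h : ∀ s ∈ S, r ∣ s) :
    S.val.sum = (r • (S.image (· / r)).val).sum := by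
  rw [← sum_val_image_mul hr, image_mul_image_div h]

theorem card_image_div (hr : 0 < r) {S : Finset ℕ} (h : ∀ s ∈ S, r ∣ s) :
    (S.image (· / r)).card = S.card := by
  conv_rhs => rw [← image_mul_image_div h]
  rw [card_image_mul hr]

end Finset

namespace Polynomial

variable {R : Type*} [CommRing R]

theorem sum_powerset_X_sub_one_pow {ι : Type*} (F : Finset ι) :
    ∑ S ∈ F.powerset, (X - 1 : R[X]) ^ S.card = X ^ F.card := by
  have h := sum_pow_mul_eq_add_pow (X - 1 : R[X]) 1 F
  rw [sub_add_cancel] at h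
  simpa using h

theorem sum_powerset_card_mul_X_sub_one_pow {ι : Type*} (F : Finset ι) :
    ∑ S ∈ F.powerset, (S.card : R[X]) * (X - 1) ^ S.card =
      (X - 1) * derivative (X ^ F.card) := by
  rw [← sum_powerset_X_sub_one_pow, derivative_sum, mul_sum]
  refine sum_congr rfl fun S _ => ?_
  rw [derivative_pow, map_natCast, derivative_sub, derivative_X, derivative_one, sub_zero,
    mul_one]
  rcases Nat.eq_zero_or_pos S.card with h | h
  · simp [h]
  · rw [mul_left_comm, mul_pow_sub_one h.ne']

theorem coeff_X_sub_one_mul_derivative (p : R[X]) (j : ℕ) :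
    ((X - 1) * derivative p).coeff j = j * p.coeff j - (j + 1) * p.coeff (j + 1) := by
  rw [sub_mul, one_mul, coeff_sub, coeff_derivative]
  cases j with
  | zero => simp
  | succ j => rw [coeff_X_mul, coeff_derivative]; push_cast; ring

theorem coeff_sum_C_mul_X_pow {α : Type*} (s : Finset α) (w : α → R) (k : α → ℕ) (j : ℕ) :
    (∑ x ∈ s, C (w x) * X ^ k x).coeff j = ∑ x ∈ s with k x = j, w x := by
  simp [finsetSum_coeff, sum_filter, eq_comm]

theorem coeff_sum_X_pow {α : Type*} (s : Finset α) (k : α → ℕ) (j : ℕ) :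
    (∑ x ∈ s, (X : R[X]) ^ k x).coeff j = #{x ∈ s | k x = j} := by
  simp [finsetSum_coeff, coeff_X_pow, sum_boole, eq_comm]

end Polynomial

namespace Nat.Partition

variable {n : ℕ}

def exchange (p : n.Partition) (a b : Multiset ℕ) (ha : a ≤ p.parts) (hb : ∀ i ∈ b, 0 < i)
    (hab : a.sum = b.sum) : n.Partition where
  parts := p.parts - a + b
  parts_pos hi := (Multiset.mem_add.mp hi).elim
    (fun h => p.parts_pos (Multiset.mem_of_le tsub_le_self h)) (hb _)
  parts_sum := by
    rw [Multiset.sum_add, ← hab, ← Multiset.sum_add, tsub_add_cancel_of_le ha, p.parts_sum]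

theorem exchange_exchange {p : n.Partition} {a b c : Multiset ℕ} (ha : a ≤ p.parts)
    (hb : ∀ i ∈ b, 0 < i) (hab : a.sum = b.sum) (hb' : b ≤ (p.exchange a b ha hb hab).parts)
    (hc : ∀ i ∈ c, 0 < i) (hbc : b.sum = c.sum) (hca : c = a) :
    (p.exchange a b ha hb hab).exchange b c hb' hc hbc = p := by
  subst hca
  ext1
  simp only [exchange, add_tsub_cancel_right, tsub_add_cancel_of_le ha]

theorem card_parts_exchange_add {p : n.Partition} {a b : Multiset ℕ} (ha : a ≤ p.parts)
    (hb : ∀ i ∈ b, 0 < i) (hab : a.sum = b.sum) :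
    Multiset.card (p.exchange a b ha hb hab).parts + Multiset.card a =
      Multiset.card p.parts + Multiset.card b := by
  have := Multiset.card_le_card ha
  simp only [exchange, Multiset.card_add, Multiset.card_sub ha]
  omega

variable (r : ℕ)

def divisibleParts (p : n.Partition) : Finset ℕ := p.parts.toFinset.filter fun i => r ∣ i

def repeatedParts (p : n.Partition) : Finset ℕ :=
  p.parts.toFinset.filter fun i => r ≤ p.parts.count i

variable {r}

theorem val_le_parts_of_subset_divisibleParts {p : n.Partition} {S : Finset ℕ}
    (hS : S ⊆ divisibleParts r p) : S.val ≤ p.parts :=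
  (Multiset.le_iff_subset S.nodup).mpr fun _ hs =>
    Multiset.mem_toFinset.mp (mem_filter.mp (hS hs)).1

theorem nsmul_val_le_parts_of_subset_repeatedParts {q : n.Partition} {T : Finset ℕ}
    (hT : T ⊆ repeatedParts r q) : r • T.val ≤ q.parts := by
  refine Multiset.le_iff_count.mpr fun t => ?_
  rw [Multiset.count_nsmul]
  by_cases ht : t ∈ T
  · rw [Multiset.count_eq_one_of_mem T.nodup ht, mul_one]
    exact (mem_filter.mp (hT ht)).2
  · rw [Multiset.count_eq_zero_of_notMem ht, mul_zero]
    exact zero_le _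

theorem pos_of_mem_nsmul_image_div (hr : 0 < r) {p : n.Partition} {S : Finset ℕ}
    (hS : S ⊆ divisibleParts r p) : ∀ i ∈ r • (S.image (· / r)).val, 0 < i := by
  intro i hi
  obtain ⟨s, hs, rfl⟩ := mem_image.mp (Multiset.mem_nsmul.mp hi).2
  obtain ⟨hsp, hrs⟩ := mem_filter.mp (hS hs)
  exact Nat.div_pos (Nat.le_of_dvd (p.parts_pos (Multiset.mem_toFinset.mp hsp)) hrs) hr

def split (hr : 0 < r) (p : n.Partition) (S : Finset ℕ) (hS : S ⊆ divisibleParts r p) :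
    n.Partition :=
  p.exchange S.val (r • (S.image (· / r)).val) (val_le_parts_of_subset_divisibleParts hS)
    (pos_of_mem_nsmul_image_div hr hS)
    (sum_val_eq_sum_nsmul_image_div hr fun _ hs => (mem_filter.mp (hS hs)).2)

theorem pos_of_mem_image_mul (hr : 0 < r) {q : n.Partition} {T : Finset ℕ}
    (hT : T ⊆ repeatedParts r q) : ∀ i ∈ (T.image (r * ·)).val, 0 < i := by
  intro i hi
  obtain ⟨t, ht, rfl⟩ := mem_image.mp hi
  exact Nat.mul_pos hr (q.parts_pos (Multiset.mem_toFinset.mp (mem_filter.mp (hT ht)).1))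

def merge (hr : 0 < r) (q : n.Partition) (T : Finset ℕ) (hT : T ⊆ repeatedParts r q) :
    n.Partition :=
  q.exchange (r • T.val) (T.image (r * ·)).val (nsmul_val_le_parts_of_subset_repeatedParts hT)
    (pos_of_mem_image_mul hr hT) (sum_val_image_mul hr T).symm

theorem image_div_subset_repeatedParts_split (hr : 0 < r) {p : n.Partition} {S : Finset ℕ}
    (hS : S ⊆ divisibleParts r p) : S.image (· / r) ⊆ repeatedParts r (split hr p S hS) := by
  intro t ht
  have hcount : r ≤ (split hr p S hS).parts.count t := by
    simp only [split, exchange, Multiset.count_add, Multiset.count_nsmul,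
      Multiset.count_eq_one_of_mem (nodup _) ht]
    omega
  exact mem_filter.mpr ⟨Multiset.mem_toFinset.mpr (Multiset.count_pos.mp (by omega)), hcount⟩

theorem image_mul_subset_divisibleParts_merge (hr : 0 < r) {q : n.Partition} {T : Finset ℕ}
    (hT : T ⊆ repeatedParts r q) : T.image (r * ·) ⊆ divisibleParts r (merge hr q T hT) := by
  intro s hs
  obtain ⟨t, -, rfl⟩ := mem_image.mp hs
  exact mem_filter.mpr ⟨Multiset.mem_toFinset.mpr (Multiset.mem_add.mpr (Or.inr hs)),
    dvd_mul_right r t⟩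

theorem merge_split (hr : 0 < r) {p : n.Partition} {S : Finset ℕ}
    (hS : S ⊆ divisibleParts r p) :
    merge hr (split hr p S hS) (S.image (· / r)) (image_div_subset_repeatedParts_split hr hS) =
      p :=
  exchange_exchange _ _ _ _ _ _
    (congrArg val (image_mul_image_div fun _ hs => (mem_filter.mp (hS hs)).2))

theorem split_merge (hr : 0 < r) {q : n.Partition} {T : Finset ℕ}
    (hT : T ⊆ repeatedParts r q) :
    split hr (merge hr q T hT) (T.image (r * ·)) (image_mul_subset_divisibleParts_merge hr hT) =
      q :=
  exchange_exchange _ _ _ _ _ _ (by rw [image_div_image_mul hr])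

theorem numParts_split (hr : 0 < r) {p : n.Partition} {S : Finset ℕ}
    (hS : S ⊆ divisibleParts r p) :
    numParts (split hr p S hS) = numParts p + (r - 1) * S.card := by
  have hdvd : ∀ s ∈ S, r ∣ s := fun _ hs => (mem_filter.mp (hS hs)).2
  have h := card_parts_exchange_add (val_le_parts_of_subset_divisibleParts hS)
    (pos_of_mem_nsmul_image_div hr hS) (sum_val_eq_sum_nsmul_image_div hr hdvd)
  rw [Multiset.card_nsmul, card_val, card_val, card_image_div hr hdvd] at h
  have hr' : r * S.card = S.card + (r - 1) * S.card := by
    rw [← one_add_mul, Nat.add_sub_cancel' (show 1 ≤ r from hr)]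
  rw [hr'] at h
  unfold numParts split
  omega

theorem sum_powerset_divisibleParts_eq_sum_powerset_repeatedParts (hr : 0 < r)
    {M : Type*} [AddCommMonoid M] (f : ℕ → ℕ → M) :
    ∑ p : n.Partition, ∑ S ∈ (divisibleParts r p).powerset,
        f (numParts p + (r - 1) * S.card) S.card =
      ∑ q : n.Partition, ∑ T ∈ (repeatedParts r q).powerset, f (numParts q) T.card := by
  rw [sum_sigma', sum_sigma']
  refine sum_bij'
    (fun a ha => ⟨split hr a.1 a.2 (mem_powerset.mp (mem_sigma.mp ha).2), a.2.image (· / r)⟩)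
    (fun b hb => ⟨merge hr b.1 b.2 (mem_powerset.mp (mem_sigma.mp hb).2), b.2.image (r * ·)⟩)
    ?_ ?_ ?_ ?_ ?_
  · rintro ⟨p, S⟩ h
    exact mem_sigma.mpr ⟨mem_univ _, mem_powerset.mpr
      (image_div_subset_repeatedParts_split hr (mem_powerset.mp (mem_sigma.mp h).2))⟩
  · rintro ⟨q, T⟩ h
    exact mem_sigma.mpr ⟨mem_univ _, mem_powerset.mpr
      (image_mul_subset_divisibleParts_merge hr (mem_powerset.mp (mem_sigma.mp h).2))⟩
  · rintro ⟨p, S⟩ h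
    have hS : S ⊆ divisibleParts r p := mem_powerset.mp (mem_sigma.mp h).2
    exact Sigma.ext (merge_split hr hS)
      (heq_of_eq (image_mul_image_div fun _ hs => (mem_filter.mp (hS hs)).2))
  · rintro ⟨q, T⟩ h
    exact Sigma.ext (split_merge hr (mem_powerset.mp (mem_sigma.mp h).2))
      (heq_of_eq (image_div_image_mul hr T))
  · rintro ⟨p, S⟩ h
    have hS : S ⊆ divisibleParts r p := mem_powerset.mp (mem_sigma.mp h).2
    rw [numParts_split, card_image_div hr fun _ hs => (mem_filter.mp (hS hs)).2]

theorem sum_numParts_mul_X_pow_card_divisibleParts (hr : 0 < r) :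
    ∑ p : n.Partition, C (numParts p : ℤ) * X ^ (divisibleParts r p).card =
      ∑ q : n.Partition, C (numParts q : ℤ) * X ^ (repeatedParts r q).card -
        C ((r : ℤ) - 1) *
          ((X - 1) * derivative (∑ q : n.Partition, X ^ (repeatedParts r q).card)) := by
  let f : ℕ → ℕ → ℤ[X] := fun a k => C ((a : ℤ) - (r - 1) * k) * (X - 1) ^ k
  calc _ = ∑ p : n.Partition, ∑ S ∈ (divisibleParts r p).powerset,
          f (numParts p + (r - 1) * S.card) S.card := by
        refine sum_congr rfl fun p _ => ?_
        rw [← sum_powerset_X_sub_one_pow, mul_sum]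
        refine sum_congr rfl fun S _ => ?_
        simp [f, Nat.cast_sub (show 1 ≤ r from hr)]
    _ = ∑ q : n.Partition, ∑ T ∈ (repeatedParts r q).powerset, f (numParts q) T.card :=
        sum_powerset_divisibleParts_eq_sum_powerset_repeatedParts hr f
    _ = _ := by
        rw [derivative_sum, mul_sum, mul_sum, ← sum_sub_distrib]
        refine sum_congr rfl fun q _ => ?_
        rw [← sum_powerset_card_mul_X_sub_one_pow, ← sum_powerset_X_sub_one_pow, mul_sum,
          mul_sum, ← sum_sub_distrib]
        refine sum_congr rfl fun T _ => ?_
        simp only [f, C_sub, C_mul, map_natCast]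
        ring

end Nat.Partition

/-- `b_{j,r}(n) = (r-1)·((j+1)·|D_{j+1,r}(n)| - j·|D_{j,r}(n)|)`. -/
theorem bDiff_eq_D (n j r : ℕ) (hr : 2 ≤ r) :
    bDiff j r n =
      ((r : ℤ) - 1) *
        (((j : ℤ) + 1) * ((setD (j + 1) r n).card : ℤ) - (j : ℤ) * ((setD j r n).card : ℤ)) := by
  have h := congrArg (coeff · j)
    (Nat.Partition.sum_numParts_mul_X_pow_card_divisibleParts (n := n) (by omega : 0 < r))
  simp only [coeff_sub, coeff_C_mul, coeff_X_sub_one_mul_derivative, coeff_sum_C_mul_X_pow,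
    coeff_sum_X_pow] at h
  have hO : setO j r n = univ.filter fun p => #(Nat.Partition.divisibleParts r p) = j := rfl
  have hD (k : ℕ) :
      setD k r n = univ.filter fun p => #(Nat.Partition.repeatedParts r p) = k := rfl
  rw [bDiff, hO, hD, hD, h]
  ring
end

section
/- For all non-negative integers n, j and all integers r ≥ 2, r times the total number of parts divisible by r in all partitions in O_{j,r}(n) equals the sum of the nonresidual multiplicities of all parts in all partitions in D_{j,r}(n). -/
open Finset

/-!
Split every part `m` divisible by `r` into `r` parts `m / r`, and replace a part `b` not
divisible by `r` occurring `c = ∑ cₖ rᵏ` times (base-`r` expansion) by `cₖ` copies of `rᵏ b`.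
In the image, the multiplicity of a part `i` is `r` times the multiplicity of `r i` plus a
base-`r` digit. Hence the nonresidual multiplicity of `i` is `r` times the multiplicity of
`r i`, and `i` is repeated at least `r` times exactly when `r i` was a part. The digits recover
the multiplicities of the parts not divisible by `r`, so the map is injective, hence a
bijection of the finite set of partitions of `n` carrying `O_{j,r}(n)` onto `D_{j,r}(n)`.
-/

namespace Nat

theorem sum_range_div_pow_mod_mul_pow (r c K : ℕ) :
    ∑ k ∈ range K, c / r ^ k % r * r ^ k = c % r ^ K := by
  induction K with
  | zero => simp [Nat.mod_one]
  | succ K ih => rw [sum_range_succ, ih, Nat.mod_pow_succ, mul_comm]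

theorem eq_of_forall_div_pow_mod_eq {r c c' : ℕ} (hr : 1 < r)
    (h : ∀ k, c / r ^ k % r = c' / r ^ k % r) : c = c' := by
  have hlt {a : ℕ} (ha : a ≤ c + c') : a < r ^ (c + c') :=
    ha.trans_lt (Nat.lt_pow_self hr)
  calc c = c % r ^ (c + c') := (Nat.mod_eq_of_lt (hlt (Nat.le_add_right c c'))).symm
    _ = c' % r ^ (c + c') := by simp only [← sum_range_div_pow_mod_mul_pow, h]
    _ = c' := Nat.mod_eq_of_lt (hlt (Nat.le_add_left c' c))

theorem pow_mul_eq_pow_mul_iff_of_not_dvd {r k k' b b' : ℕ} (hr : r ≠ 0) (hb : ¬r ∣ b)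
    (hb' : ¬r ∣ b') : r ^ k * b = r ^ k' * b' ↔ k = k' ∧ b = b' := by
  refine ⟨fun h => ?_, by rintro ⟨rfl, rfl⟩; rfl⟩
  have hne : r ^ k * b ≠ 0 :=
    mul_ne_zero (pow_ne_zero k hr) fun hb0 => hb (hb0 ▸ dvd_zero r)
  simpa using (maxPowDvdDiv_of_pow_mul_eq hne rfl hb).symm.trans
    (maxPowDvdDiv_of_pow_mul_eq hne h.symm hb')

end Nat

namespace Multiset

variable {r : ℕ}

-- Positions `k ≥ c` would only contribute zero digits, since `c < r ^ c`.
def digitParts (r b c : ℕ) : Multiset ℕ :=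
  ∑ k ∈ Finset.range c, replicate (c / r ^ k % r) (r ^ k * b)

theorem sum_digitParts (hr : 1 < r) (b c : ℕ) : (digitParts r b c).sum = c * b := by
  simp only [digitParts, sum_sum, sum_replicate, smul_eq_mul, ← mul_assoc, ← Finset.sum_mul,
    Nat.sum_range_div_pow_mod_mul_pow, Nat.mod_eq_of_lt (Nat.lt_pow_self hr)]

theorem exists_eq_pow_mul_of_mem_digitParts {b c x : ℕ} (hx : x ∈ digitParts r b c) :
    ∃ k, x = r ^ k * b := by
  obtain ⟨k, -, hk⟩ := mem_sum.mp hx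
  exact ⟨k, eq_of_mem_replicate hk⟩

theorem count_digitParts (hr : 1 < r) {b b' : ℕ} (hb : ¬r ∣ b) (hb' : ¬r ∣ b') (c k : ℕ) :
    count (r ^ k * b) (digitParts r b' c) = if b' = b then c / r ^ k % r else 0 := by
  simp only [digitParts, count_sum', count_replicate,
    Nat.pow_mul_eq_pow_mul_iff_of_not_dvd (by omega : r ≠ 0) hb' hb]
  split_ifs with hbb
  · simp only [hbb, and_true, Finset.sum_ite_eq', Finset.mem_range]
    split_ifs with hk
    · rfl
    · rw [Nat.div_eq_of_lt ((Nat.lt_pow_self hr).trans_le (Nat.pow_le_pow_right (by omega)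
        (not_lt.mp hk))), Nat.zero_mod]
  · simp [hbb]

def expandParts (r : ℕ) (s : Multiset ℕ) : Multiset ℕ :=
  ∑ b ∈ s.toFinset, digitParts r b (s.count b)

theorem sum_expandParts (hr : 1 < r) (s : Multiset ℕ) : (expandParts r s).sum = s.sum := by
  simp only [expandParts, sum_sum, sum_digitParts hr, Finset.sum_multiset_count s, smul_eq_mul]

theorem count_expandParts (hr : 1 < r) {s : Multiset ℕ} (hs : ∀ b ∈ s, ¬r ∣ b) {b : ℕ}
    (hb : ¬r ∣ b) (k : ℕ) : count (r ^ k * b) (expandParts r s) = count b s / r ^ k % r := by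
  rw [expandParts, count_sum', Finset.sum_congr rfl fun b' hb' =>
    count_digitParts hr hb (hs b' (mem_toFinset.mp hb')) _ k, Finset.sum_ite_eq']
  split_ifs with hmem
  · rfl
  · rw [count_eq_zero_of_notMem (mt mem_toFinset.mpr hmem), Nat.zero_div, Nat.zero_mod]

theorem count_expandParts_lt (hr : 1 < r) {s : Multiset ℕ} (hs : ∀ b ∈ s, ¬r ∣ b) (i : ℕ) :
    count i (expandParts r s) < r := by
  by_cases hi : i ∈ expandParts r s
  · obtain ⟨b, hb, hib⟩ := mem_sum.mp hi
    obtain ⟨k, rfl⟩ := exists_eq_pow_mul_of_mem_digitParts hib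
    rw [count_expandParts hr hs (hs b (mem_toFinset.mp hb))]
    exact Nat.mod_lt _ (by omega)
  · rw [count_eq_zero_of_notMem hi]
    omega

def divParts (r : ℕ) (s : Multiset ℕ) : Multiset ℕ :=
  (s.filter (r ∣ ·)).map (· / r)

theorem map_mul_divParts (r : ℕ) (s : Multiset ℕ) :
    (divParts r s).map (r * ·) = s.filter (r ∣ ·) := by
  rw [divParts, map_map]
  conv_rhs => rw [← map_id (s.filter (r ∣ ·))]
  exact map_congr rfl fun m hm => Nat.mul_div_cancel' (of_mem_filter hm)

theorem count_divParts (hr : r ≠ 0) (s : Multiset ℕ) (i : ℕ) :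
    count i (divParts r s) = count (r * i) s := by
  rw [← count_map_eq_count' (r * ·) _ (mul_right_injective₀ hr), map_mul_divParts,
    count_filter_of_pos (dvd_mul_right r i)]

theorem mem_divParts (hr : r ≠ 0) {s : Multiset ℕ} {i : ℕ} : i ∈ divParts r s ↔ r * i ∈ s := by
  rw [← count_pos, count_divParts hr, count_pos]

def glaisherMap (r : ℕ) (s : Multiset ℕ) : Multiset ℕ :=
  r • divParts r s + expandParts r (s.filter (¬r ∣ ·))

theorem count_glaisherMap (hr : r ≠ 0) (s : Multiset ℕ) (i : ℕ) :
    count i (glaisherMap r s) =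
      r * count (r * i) s + count i (expandParts r (s.filter (¬r ∣ ·))) := by
  rw [glaisherMap, count_add, count_nsmul, count_divParts hr]

theorem count_glaisherMap_div (hr : 1 < r) (s : Multiset ℕ) (i : ℕ) :
    count i (glaisherMap r s) / r = count (r * i) s := by
  rw [count_glaisherMap (by omega), Nat.mul_add_div (by omega),
    Nat.div_eq_of_lt (count_expandParts_lt hr (fun b hb => (mem_filter.mp hb).2) i), add_zero]

theorem count_glaisherMap_mod (hr : 1 < r) (s : Multiset ℕ) {b : ℕ} (hb : ¬r ∣ b) (k : ℕ) :
    count (r ^ k * b) (glaisherMap r s) % r = count b s / r ^ k % r := by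
  have hs : ∀ b ∈ s.filter (¬r ∣ ·), ¬r ∣ b := fun b hb => (mem_filter.mp hb).2
  rw [count_glaisherMap (by omega), Nat.mul_add_mod,
    Nat.mod_eq_of_lt (count_expandParts_lt hr hs _), count_expandParts hr hs hb,
    count_filter_of_pos (p := (¬r ∣ ·)) hb]

theorem glaisherMap_injective (hr : 1 < r) : Function.Injective (glaisherMap r) := by
  intro s t h
  ext x
  by_cases hx : r ∣ x
  · obtain ⟨y, rfl⟩ := hx
    rw [← count_glaisherMap_div hr, h, count_glaisherMap_div hr]
  · refine Nat.eq_of_forall_div_pow_mod_eq hr fun k => ?_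
    rw [← count_glaisherMap_mod hr _ hx, h, count_glaisherMap_mod hr _ hx]

theorem sum_glaisherMap (hr : 1 < r) (s : Multiset ℕ) : (glaisherMap r s).sum = s.sum := by
  have hdiv : r * (divParts r s).sum = (s.filter (r ∣ ·)).sum := by
    rw [← map_mul_divParts, sum_map_mul_left, map_id']
  rw [glaisherMap, sum_add, sum_nsmul, smul_eq_mul, hdiv, sum_expandParts hr,
    sum_filter_add_sum_filter_not]

theorem pos_of_mem_glaisherMap (hr : 1 < r) {s : Multiset ℕ} (hs : ∀ x ∈ s, 0 < x) {x : ℕ}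
    (hx : x ∈ glaisherMap r s) : 0 < x := by
  rcases mem_add.mp hx with hx | hx
  · exact Nat.pos_of_mul_pos_left (hs _ ((mem_divParts (by omega)).mp (mem_nsmul.mp hx).2))
  · obtain ⟨b, hb, hxb⟩ := mem_sum.mp hx
    obtain ⟨k, rfl⟩ := exists_eq_pow_mul_of_mem_digitParts hxb
    exact Nat.mul_pos (pow_pos (by omega) k) (hs b (mem_filter.mp (mem_toFinset.mp hb)).1)

theorem le_count_glaisherMap_iff (hr : 1 < r) {s : Multiset ℕ} {i : ℕ} :
    r ≤ count i (glaisherMap r s) ↔ r * i ∈ s := by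
  rw [← count_pos, ← count_glaisherMap_div hr, Nat.div_pos_iff]
  omega

theorem card_filter_le_count_glaisherMap (hr : 1 < r) (s : Multiset ℕ) :
    ((glaisherMap r s).toFinset.filter fun i => r ≤ (glaisherMap r s).count i).card =
      (s.toFinset.filter fun m => r ∣ m).card := by
  have hfilter : ((glaisherMap r s).toFinset.filter fun i => r ≤ (glaisherMap r s).count i) =
      (divParts r s).toFinset := by
    ext i
    simp only [Finset.mem_filter, mem_toFinset, le_count_glaisherMap_iff hr,
      mem_divParts (by omega : r ≠ 0)]
    exact ⟨And.right, fun h => ⟨count_pos.mp ((by omega : 0 < r).trans_le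
      (le_count_glaisherMap_iff hr |>.mpr h)), h⟩⟩
  rw [hfilter, ← toFinset_filter, ← map_mul_divParts, toFinset_map,
    Finset.card_image_of_injective _ (mul_right_injective₀ (by omega : r ≠ 0))]

theorem sum_nonresidual_glaisherMap (hr : 1 < r) (s : Multiset ℕ) :
    ∑ i ∈ (glaisherMap r s).toFinset, r * ((glaisherMap r s).count i / r) =
      r * card (s.filter (r ∣ ·)) := by
  have hsub : ∀ i ∈ divParts r s, i ∈ (glaisherMap r s).toFinset := fun i hi =>
    mem_toFinset.mpr (mem_add.mpr (.inl (mem_nsmul.mpr ⟨by omega, hi⟩)))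
  simp only [count_glaisherMap_div hr, ← count_divParts (by omega : r ≠ 0), ← Finset.mul_sum]
  rw [sum_count_eq_card hsub, ← card_map (r * ·), map_mul_divParts]

end Multiset

namespace Nat.Partition

def glaisher {r : ℕ} (hr : 1 < r) {n : ℕ} (p : n.Partition) : n.Partition where
  parts := p.parts.glaisherMap r
  parts_pos := Multiset.pos_of_mem_glaisherMap hr fun _ => p.parts_pos
  parts_sum := by rw [Multiset.sum_glaisherMap hr, p.parts_sum]

theorem glaisher_bijective {r : ℕ} (hr : 1 < r) (n : ℕ) :
    Function.Bijective (glaisher hr (n := n)) := by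
  have hinj : Function.Injective (glaisher hr (n := n)) := fun p q h =>
    Nat.Partition.ext (Multiset.glaisherMap_injective hr (congrArg Nat.Partition.parts h))
  exact ⟨hinj, Finite.injective_iff_surjective.mp hinj⟩

end Nat.Partition

/-- `r` times the total number of parts divisible by `r` in all partitions in `O_{j,r}(n)`
equals the sum of the nonresidual multiplicities of all parts in all partitions in
`D_{j,r}(n)`. -/
theorem nonresidual_multiplicities (n j r : ℕ) (hr : 2 ≤ r) :
    r * ∑ p ∈ setO j r n, ellMod r 0 p =
      ∑ p ∈ setD j r n, ∑ i ∈ p.parts.toFinset, r * (p.parts.count i / r) := by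
  rw [Finset.mul_sum]
  refine Finset.sum_bijective _ (Nat.Partition.glaisher_bijective hr n) (fun p => ?_)
    (fun p _ => ?_)
  · simp [setO, setD, Nat.Partition.glaisher, Multiset.card_filter_le_count_glaisherMap hr]
  · simp only [Nat.Partition.glaisher, Multiset.sum_nonresidual_glaisherMap hr, ellMod,
      ← Nat.dvd_iff_mod_eq_zero]
end
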